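/- For ordinals γ, m, δ with γ, m, δ nonzero, m finite, and δ < ω^γ, the ordinals ω^γ·m + 1 and ω^γ·m + δ are biembeddable: each is homeomorphic to a subspace of the other (with subspace topologies induced from the order topology). -/

import Mathlib

open Set Ordinal
open scoped Cardinal

universe u

/-- Natural (Hessenberg) addition of ordinals, as `Ordinal.nadd` in the older Mathlib
(removed since). -/
noncomputable def Ordinal.nadd : Ordinal.{u} → Ordinal.{u} → Ordinal.{u}
  | a, b =>
    max (⨆ x : Iio a, Order.succ (Ordinal.nadd x.1 b)) (⨆ x : Iio b, Order.succ (Ordinal.nadd a x.1))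
termination_by a b => (a, b)
decreasing_by all_goals cases x; decreasing_tactic

infixl:65 " ♯ " => Ordinal.nadd

noncomputable section

/-- Derived set (non-isolated points) of a set of ordinals, as a subspace. -/
def deriv' (s : Set Ordinal.{0}) : Set Ordinal.{0} := {x ∈ s | x ∈ closure (s \ {x})}

/-- Iterated Cantor–Bendixson derivative. -/
def iterDeriv (s : Set Ordinal.{0}) (o : Ordinal.{0}) : Set Ordinal.{0} :=
  Ordinal.limitRecOn o s (fun _ ih => deriv' ih) (fun o _ ih => ⋂ (p : Ordinal.{0}) (h : p < o), ih p h)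

/-- `s` contains a homeomorphic copy of the ordinal `α` (with its order topology). -/
def HomeoCopy (α : Ordinal.{0}) (s : Set Ordinal.{0}) : Prop :=
  ∃ t : Set Ordinal, t ⊆ s ∧ Nonempty ((Iio α : Set Ordinal.{0}) ≃ₜ t)

/-- Two ordinals are biembeddable: each is homeomorphic to a subspace of the other. -/
def Biembed (α β : Ordinal.{0}) : Prop := HomeoCopy α (Iio β) ∧ HomeoCopy β (Iio α)

/-- Two sets of ordinals are order-homeomorphic: there is an order-preserving homeomorphism. -/
def OrderHomeo (X Y : Set Ordinal.{0}) : Prop :=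
  ∃ e : X ≃ₜ Y, ∀ a b : X, a ≤ b ↔ e a ≤ e b

/-- An ordinal is order-reinforcing. -/
def OrderReinforcing (α : Ordinal.{0}) : Prop :=
  ∀ X : Set Ordinal, Nonempty ((Iio α : Set Ordinal.{0}) ≃ₜ X) → ∃ Y ⊆ X, OrderHomeo (Iio α) Y

/-- The Cantor–Bendixson rank of an ordinal: the least exponent in its Cantor normal form. -/
def CB (x : Ordinal.{0}) : Ordinal := if x = 0 then 0 else sSup {γ | (ω : Ordinal.{0}) ^ γ ∣ x}

/-- The natural (Hessenberg) sum of a finite family of ordinals. -/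
def natSumFam {k : ℕ} (α : Fin k → Ordinal.{0}) : Ordinal := (List.ofFn α).foldr (· ♯ ·) 0

/-- The Milner–Rado sum of a finite family of ordinals. -/
def mrSumFam {k : ℕ} (α : Fin k → Ordinal.{0}) : Ordinal :=
  sInf {δ | ∀ β : Fin k → Ordinal, (∀ i, β i < α i) → δ ≠ natSumFam β}

/-- The topological pigeonhole relation `β → (top α i)¹` for finitely many colours. -/
def TopPH {k : ℕ} (β : Ordinal.{0}) (α : Fin k → Ordinal.{0}) : Prop :=
  ∀ c : Ordinal → Fin k, ∃ i, HomeoCopy (α i) (Iio β ∩ c ⁻¹' {i})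

/-- The topological pigeonhole relation with an arbitrary index type of colours. -/
def TopPHFam {ι : Type*} (β : Ordinal.{0}) (α : ι → Ordinal.{0}) : Prop :=
  ∀ c : Ordinal → ι, ∃ i, HomeoCopy (α i) (Iio β ∩ c ⁻¹' {i})

/-- `ω̄[γ, m]`: `ω ^ γ * m + 1` if `γ > 0`, and `m` if `γ = 0`. -/
def obar (γ : Ordinal.{0}) (m : ℕ) : Ordinal := if γ = 0 then (m : Ordinal.{0}) else ω ^ γ * m + 1

/-- `C` is closed and unbounded in `o`. -/
def IsClubIn (C : Set Ordinal.{0}) (o : Ordinal.{0}) : Prop :=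
  C ⊆ Iio o ∧ (∀ x < o, ∃ y ∈ C, x ≤ y) ∧
    ∀ x < o, x ≠ 0 → (∀ y < x, ∃ z ∈ C, y < z ∧ z < x) → x ∈ C

/-- `S` is stationary in `o`: it meets every club subset of `o`. -/
def StationaryIn (S : Set Ordinal.{0}) (o : Ordinal.{0}) : Prop :=
  ∀ C, IsClubIn C o → (S ∩ C).Nonempty


/-!
Write `α = ω ^ γ * m` and `δ = 1 + δ'`, so that `α + δ = (α + 1) + δ'`. Cutting at the successor
`α + 1` splits `α + δ` into the clopen pieces `α + 1` and a copy of `δ'`. Put the copy of `δ'` first,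
then skip the point `δ'`, then place `α + 1`: this lands in `δ' + 1 + (α + 1)`, which is `α + 1`
because `δ' + 1 < ω ^ γ` is absorbed by `α`.
-/

open Topology

namespace Ordinal

def sumShift (a c b : Ordinal.{0}) : Iio a ⊕ Iio b → Ordinal.{0} :=
  Sum.elim Subtype.val fun y => c + 1 + y.1

theorem range_add_Iio (d b : Ordinal.{0}) :
    range (fun y : Iio b => d + y.1) = Ico d (d + b) := by
  ext x
  constructor
  · rintro ⟨y, rfl⟩
    exact ⟨le_self_add, add_lt_add_right y.2 d⟩
  · rintro ⟨hdx, hxb⟩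
    refine ⟨⟨x - d, ?_⟩, Ordinal.add_sub_cancel_of_le hdx⟩
    rwa [mem_Iio, ← add_lt_add_iff_left d, Ordinal.add_sub_cancel_of_le hdx]

theorem isOpenEmbedding_succ_add_Iio (c b : Ordinal.{0}) :
    IsOpenEmbedding (fun y : Iio b => c + 1 + y.1) := by
  have hrange := range_add_Iio (c + 1) b
  refine ⟨StrictMono.isEmbedding_of_ordConnected (fun _ _ h => (add_lt_add_iff_left _).2 h) ?_, ?_⟩
  · rw [hrange]; exact ordConnected_Ico
  · rw [hrange, ← Order.succ_eq_add_one, Order.Ico_succ_left]; exact isOpen_Ioo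

theorem range_sumShift (a c b : Ordinal.{0}) :
    range (sumShift a c b) = Iio a ∪ Ico (c + 1) (c + 1 + b) := by
  rw [sumShift, Set.Sum.elim_range, Subtype.range_val, range_add_Iio]

theorem isOpenEmbedding_sumShift {a c b : Ordinal.{0}} (h : a ≤ c + 1) :
    IsOpenEmbedding (sumShift a c b) := by
  refine (isOpen_Iio.isOpenEmbedding_subtypeVal).sumElim (isOpenEmbedding_succ_add_Iio c b) ?_
  refine Subtype.val_injective.sumElim (isOpenEmbedding_succ_add_Iio c b).injective ?_
  intro x y hxy
  exact (lt_of_lt_of_le x.2 (h.trans le_self_add)).ne hxy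

/-- Since `c + 1` is a successor, `Iio (c + 1)` is clopen in `Iio (c + 1 + b)`. -/
def sumHomeomorphIioAdd (c b : Ordinal.{0}) : Iio (c + 1) ⊕ Iio b ≃ₜ Iio (c + 1 + b) :=
  (isOpenEmbedding_sumShift le_rfl).isEmbedding.toHomeomorph.trans
    (Homeomorph.setCongr (by rw [range_sumShift, Iio_union_Ico_eq_Iio le_self_add]))

end Ordinal

theorem HomeoCopy.of_isEmbedding {α : Ordinal.{0}} {s : Set Ordinal.{0}} {f : Iio α → Ordinal}
    (hf : IsEmbedding f) (hs : range f ⊆ s) : HomeoCopy α s :=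
  ⟨range f, hs, ⟨hf.toHomeomorph⟩⟩

theorem HomeoCopy.of_le {α β : Ordinal.{0}} (h : α ≤ β) : HomeoCopy α (Iio β) :=
  ⟨Iio α, Iio_subset_Iio h, ⟨Homeomorph.refl _⟩⟩

theorem homeoCopy_succ_add {a b : Ordinal.{0}} (hab : b + 1 + a = a) :
    HomeoCopy (a + 1 + b) (Iio (a + 1)) := by
  have hb : b < a + 1 := by
    rw [← hab, add_assoc, add_assoc]; exact lt_add_of_pos_right b (by positivity)
  refine .of_isEmbedding (f := sumShift b b (a + 1) ∘ Sum.swap ∘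
    (sumHomeomorphIioAdd a b).symm) ?_ ?_
  · exact (isOpenEmbedding_sumShift le_self_add).isEmbedding.comp
      ((Homeomorph.sumComm _ _).isEmbedding.comp (Homeomorph.isEmbedding _))
  · refine (range_comp_subset_range _ _).trans ?_
    rw [range_sumShift, ← add_assoc, hab]
    exact union_subset (Iio_subset_Iio hb.le) Ico_subset_Iio_self

theorem biembed_omega_pow_mul_succ_general (γ m δ : Ordinal.{0}) (hm : m ≠ 0)
    (hδ : δ ≠ 0) (hδlt : δ < ω ^ γ) :
    Biembed (ω ^ γ * m + 1) (ω ^ γ * m + δ) := by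
  have hδ1 : 1 ≤ δ := Order.one_le_iff_ne_zero.2 hδ
  have hsplit : ω ^ γ * m + δ = ω ^ γ * m + 1 + (δ - 1) := by
    rw [add_assoc, Ordinal.add_sub_cancel_of_le hδ1]
  have habsorb : δ - 1 + 1 + ω ^ γ * m = ω ^ γ * m :=
    Ordinal.add_of_omega0_opow_le
      (Ordinal.isPrincipal_add_omega0_opow γ ((Ordinal.sub_le_self δ 1).trans_lt hδlt)
        (hδ1.trans_lt hδlt))
      (Ordinal.le_mul_left _ (pos_iff_ne_zero.2 hm))
  refine ⟨.of_le (add_le_add_right hδ1 _), ?_⟩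
  rw [hsplit]
  exact homeoCopy_succ_add habsorb

/-- `ω^γ·m + 1` and `ω^γ·m + δ` are biembeddable. -/
theorem biembed_omega_pow_mul_succ (γ m δ : Ordinal.{0}) (hγ : γ ≠ 0) (hm : m ≠ 0)
    (hmfin : m < ω) (hδ : δ ≠ 0) (hδlt : δ < ω ^ γ) :
    Biembed (ω ^ γ * m + 1) (ω ^ γ * m + δ) :=
  biembed_omega_pow_mul_succ_general γ m δ hm hδ hδlt
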